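/- If M ∈ M_n(ℝ) has det M < 0, then there exist B_1, B_2 ∈ M_n(ℝ) such that M = Ĩ_n · e^{B_1} e^{B_2}, where Ĩ_n is the diagonal matrix with diagonal entries (-1, 1, …, 1). -/

import Mathlib

/-!
Multiplying by `Ĩₙ` gives a matrix of positive determinant, whose polar decomposition is
`e^{B₁} Q` with `e^{2 B₁} = M Mᵀ` and `Q ∈ SO(n)`; it remains to find a logarithm of `Q`.
An orthogonal change of basis diagonalising the symmetric part of `Q` brings it to the form
`diag μ + W` with `W` skew, and orthogonality forces `W` to commute with `diag μ` and
`W² = diag (μ² - 1)`. Hence `A₀ = diag (θ / sin θ) W`, `θ = arccos μ`, satisfies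
`A₀² = -diag θ²`, and Euler's formula `e^A = cos θ + (sin θ / θ) A` recovers `diag μ + W` away
from the eigenvalue `-1`. That eigenvalue has even multiplicity, since
`1 = det Q = det e^{A₀} · (-1)^k` with `det e^{A₀} > 0`, so on its eigenspace `Q = -1 = e^{π J}`
for a complex structure `J`, which commutes with `A₀`.
-/

open Matrix NormedSpace
open scoped Nat

lemma Real.hasSum_cos_neg_sq (x : ℝ) :
    HasSum (fun k : ℕ => (-x ^ 2) ^ k / (2 * k)!) (Real.cos x) := by
  convert Real.hasSum_cos x using 2 with k
  rw [neg_pow, pow_mul]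

lemma Real.hasSum_sinc (x : ℝ) :
    HasSum (fun k : ℕ => (-x ^ 2) ^ k / (2 * k + 1)!) (Real.sinc x) := by
  rcases eq_or_ne x 0 with rfl | hx
  · rw [Real.sinc_zero]
    convert hasSum_single (f := fun k : ℕ => (-(0:ℝ) ^ 2) ^ k / (2 * k + 1)!) 0 _ using 1
    · simp
    · intro k hk; simp [hk]
  · rw [Real.sinc_of_ne_zero hx]
    convert (Real.hasSum_sin x).div_const x using 1
    · rfl
    funext k
    rw [neg_pow, ← pow_mul, pow_succ]
    field_simp

lemma Real.sin_arccos_sq {x : ℝ} (hx : x ^ 2 ≤ 1) : Real.sin (Real.arccos x) ^ 2 = 1 - x ^ 2 := by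
  rw [Real.sin_arccos, Real.sq_sqrt (by linarith)]

namespace Matrix

theorem exists_mul_self_eq_neg_one_of_even_card {κ R : Type*} [Fintype κ] [DecidableEq κ]
    [Ring R] (h : Even (Fintype.card κ)) : ∃ K : Matrix κ κ R, K * K = -1 := by
  obtain ⟨m, hm⟩ := h
  let e : κ ≃ Fin m ⊕ Fin m := Fintype.equivOfCardEq (by simp [hm])
  refine ⟨(fromBlocks 0 (-1) 1 0).submatrix e e, ?_⟩
  rw [submatrix_mul_equiv, fromBlocks_multiply]
  simp only [Matrix.mul_zero, Matrix.mul_neg, Matrix.mul_one, add_zero, zero_add, neg_zero]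
  rw [← neg_zero, ← fromBlocks_neg, fromBlocks_one]
  exact congrArg Neg.neg (submatrix_one_equiv e)

theorem apply_eq_neg_of_star_eq_neg {ι : Type*} {W : Matrix ι ι ℝ} (hW : star W = -W) (i j : ι) :
    W j i = -W i j := by
  simpa using congrFun (congrFun hW i) j

theorem mul_eq_zero_of_forall_eq_zero_or_eq_zero {l m n R : Type*} [Fintype m] [Semiring R]
    {A : Matrix l m R} {B : Matrix m n R} (h : ∀ i k j, A i k = 0 ∨ B k j = 0) : A * B = 0 := by
  ext i j
  refine Finset.sum_eq_zero fun k _ => ?_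
  rcases h i k j with h | h <;> simp [h]

variable {ι : Type*} [Fintype ι] [DecidableEq ι]

theorem exp_eq_of_mul_self_eq_diagonal {A : Matrix ι ι ℝ} {θ : ι → ℝ}
    (hA : A * A = diagonal fun i => -θ i ^ 2) :
    exp A = diagonal (fun i => Real.cos (θ i)) + diagonal (fun i => Real.sinc (θ i)) * A := by
  have hpow (k : ℕ) : A ^ (2 * k) = diagonal fun i => (-θ i ^ 2) ^ k := by
    rw [pow_mul, sq, hA, diagonal_pow]; rfl
  rw [exp_eq_tsum ℝ]
  refine HasSum.tsum_eq (HasSum.even_add_odd ?_ ?_)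
  · convert (Pi.hasSum.mpr fun i => Real.hasSum_cos_neg_sq (θ i)).matrix_diagonal using 1
    · rfl
    funext k
    rw [hpow, ← diagonal_smul]
    congr 1; ext i; simp [div_eq_inv_mul]
  · convert ((Pi.hasSum.mpr fun i => Real.hasSum_sinc (θ i)).matrix_diagonal).mul_right A
      using 1
    · rfl
    funext k
    rw [pow_succ, hpow, ← smul_mul_assoc, ← diagonal_smul]
    congr 2; ext i; simp [div_eq_inv_mul]

theorem det_exp_pos (A : Matrix ι ι ℝ) : 0 < (exp A).det := by
  have hhalf : exp A = exp ((2⁻¹ : ℝ) • A) * exp ((2⁻¹ : ℝ) • A) := by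
    rw [← exp_add_of_commute _ _ (Commute.refl _), ← add_smul]
    norm_num
  have hunit : IsUnit (exp ((2⁻¹ : ℝ) • A)).det :=
    (isUnit_iff_isUnit_det _).mp (Matrix.isUnit_exp _)
  rw [hhalf, det_mul]
  exact mul_self_pos.mpr hunit.ne_zero

theorem exp_unitary_conj {U : Matrix ι ι ℝ} (hU : U ∈ unitaryGroup ι ℝ) (A : Matrix ι ι ℝ) :
    exp (U * A * star U) = U * exp A * star U := by
  have hinv : U⁻¹ = star U := inv_eq_right_inv (mem_unitaryGroup_iff.mp hU)
  rw [← hinv, exp_conj U A ((isUnit_iff_isUnit_det U).mpr (UnitaryGroup.det_isUnit ⟨U, hU⟩))]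

theorem IsHermitian.eq_eigenvectorUnitary_mul_diagonal {A : Matrix ι ι ℝ} (hA : A.IsHermitian) :
    A = (hA.eigenvectorUnitary : Matrix ι ι ℝ) * diagonal hA.eigenvalues *
      star (hA.eigenvectorUnitary : Matrix ι ι ℝ) := by
  have h := hA.spectral_theorem
  rwa [Unitary.conjStarAlgAut_apply] at h

theorem PosDef.exists_isHermitian_exp_eq {T : Matrix ι ι ℝ} (hT : T.PosDef) :
    ∃ B : Matrix ι ι ℝ, B.IsHermitian ∧ exp B = T := by
  set U : Matrix ι ι ℝ := ↑hT.isHermitian.eigenvectorUnitary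
  refine ⟨U * diagonal (fun i => Real.log (hT.isHermitian.eigenvalues i)) * star U, ?_, ?_⟩
  · exact isHermitian_mul_mul_conjTranspose U (isHermitian_diagonal _)
  · have hexp_log : exp (fun i => Real.log (hT.isHermitian.eigenvalues i)) =
        hT.isHermitian.eigenvalues := by
      funext i
      simp [← Real.exp_eq_exp_ℝ, Real.exp_log (hT.eigenvalues_pos i)]
    rw [exp_unitary_conj (hT.isHermitian.eigenvectorUnitary).2, exp_diagonal, hexp_log]
    exact hT.isHermitian.eq_eigenvectorUnitary_mul_diagonal.symm

theorem exists_mul_self_eq_neg_diagonal_of_even_card {R : Type*} [Ring R] (s : Finset ι)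
    (hs : Even s.card) :
    ∃ J : Matrix ι ι R, J * J = -diagonal (fun i => if i ∈ s then 1 else 0) ∧
      ∀ i j, J i j ≠ 0 → i ∈ s ∧ j ∈ s := by
  obtain ⟨K, hK⟩ := exists_mul_self_eq_neg_one_of_even_card (κ := s) (R := R) (by simpa using hs)
  set E : Matrix ι s R := (1 : Matrix ι ι R).submatrix id (↑)
  set P : Matrix ι ι R := diagonal fun i => if i ∈ s then 1 else 0
  have hE : Eᵀ * E = 1 := by
    rw [transpose_submatrix, transpose_one, ← submatrix_mul _ _ _ _ _ Function.bijective_id,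
      Matrix.one_mul, submatrix_one _ Subtype.val_injective]
  have hP : E * Eᵀ = P := by
    ext i j
    simp only [E, P, mul_apply, transpose_apply, submatrix_apply, id, one_apply, diagonal_apply]
    rw [Finset.sum_coe_sort s fun a => (if i = a then (1 : R) else 0) * if j = a then 1 else 0]
    by_cases hij : i = j <;> simp [hij]
  refine ⟨E * K * Eᵀ, ?_, fun i j hij => ⟨?_, ?_⟩⟩
  · calc E * K * Eᵀ * (E * K * Eᵀ) = E * (K * (Eᵀ * E) * K) * Eᵀ := by
          simp only [Matrix.mul_assoc]
      _ = -P := by rw [hE, Matrix.mul_one, hK, Matrix.mul_neg, Matrix.mul_one, Matrix.neg_mul, hP]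
  · have hPJ : P * (E * K * Eᵀ) = E * K * Eᵀ := by
      rw [← hP, Matrix.mul_assoc, ← Matrix.mul_assoc Eᵀ, ← Matrix.mul_assoc Eᵀ, hE, Matrix.one_mul]
      simp only [Matrix.mul_assoc]
    rw [← hPJ, diagonal_mul] at hij
    by_contra hi
    simp [hi] at hij
  · have hJP : E * K * Eᵀ * P = E * K * Eᵀ := by
      rw [← hP, Matrix.mul_assoc, ← Matrix.mul_assoc Eᵀ, hE, Matrix.one_mul]
    rw [← hJP, mul_diagonal] at hij
    by_contra hj
    simp [hj] at hij

theorem exists_exp_eq_diagonal_sign_of_even_card (s : Finset ι) (hs : Even s.card) :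
    ∃ J : Matrix ι ι ℝ, (∀ i j, J i j ≠ 0 → i ∈ s ∧ j ∈ s) ∧
      exp J = diagonal fun i => if i ∈ s then -1 else 1 := by
  obtain ⟨J, hJ, hsupp⟩ := exists_mul_self_eq_neg_diagonal_of_even_card (R := ℝ) s hs
  refine ⟨Real.pi • J, fun i j hij => hsupp i j fun h => hij (by simp [h]), ?_⟩
  have hsq : Real.pi • J * (Real.pi • J) =
      diagonal fun i => -(if i ∈ s then Real.pi else 0) ^ 2 := by
    rw [smul_mul_smul_comm, hJ]
    ext i j
    by_cases hi : i ∈ s <;> by_cases hij : i = j <;> simp [hij, sq]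
  have hsinc :
      (diagonal fun i => Real.sinc (if i ∈ s then Real.pi else 0)) * (Real.pi • J) = 0 := by
    ext i j
    rw [diagonal_mul]
    by_cases hi : i ∈ s
    · simp [hi, Real.sinc_of_ne_zero Real.pi_ne_zero]
    · simp [show J i j = 0 by by_contra h; exact hi (hsupp i j h).1]
  rw [exp_eq_of_mul_self_eq_diagonal hsq, hsinc, add_zero]
  congr 1
  funext i
  by_cases hi : i ∈ s <;> simp [hi]

theorem even_card_of_exp_eq_mul_diagonal_sign {A S : Matrix ι ι ℝ} {s : Finset ι}
    (hS : S.det = 1) (h : exp A = S * diagonal fun i => if i ∈ s then -1 else 1) :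
    Even s.card := by
  have hpos := det_exp_pos A
  rw [h, det_mul, hS, one_mul, det_diagonal, Finset.prod_ite, Finset.prod_const,
    Finset.prod_const_one, mul_one, Finset.filter_mem_eq_inter, Finset.univ_inter] at hpos
  by_contra hodd
  rw [(Nat.not_even_iff_odd.mp hodd).neg_one_pow] at hpos
  linarith

section OrthogonalNormalForm

variable {μ : ι → ℝ} {W : Matrix ι ι ℝ}

theorem eq_of_commute_diagonal_of_apply_ne_zero (hW : Commute W (diagonal μ)) {i j : ι}
    (hij : W i j ≠ 0) : μ i = μ j := by
  have h := congrFun (congrFun hW.eq i) j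
  rw [mul_diagonal, diagonal_mul, mul_comm] at h
  exact (mul_right_cancel₀ hij h).symm

theorem commute_diagonal_comp (hW : Commute W (diagonal μ)) (f : ℝ → ℝ) :
    Commute W (diagonal (f ∘ μ)) := by
  ext i j
  rw [mul_diagonal, diagonal_mul]
  by_cases hij : W i j = 0
  · simp [hij]
  · simp [eq_of_commute_diagonal_of_apply_ne_zero hW hij, mul_comm]

theorem commute_diagonal_and_mul_self_of_diagonal_add_mem_unitaryGroup (hW : star W = -W)
    (hS : diagonal μ + W ∈ unitaryGroup ι ℝ) :
    Commute W (diagonal μ) ∧ W * W = diagonal fun i => μ i ^ 2 - 1 := by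
  have hD : star (diagonal μ) = diagonal μ := by simp [star_eq_conjTranspose]
  have h₁ := mem_unitaryGroup_iff.mp hS
  have h₂ := mem_unitaryGroup_iff'.mp hS
  rw [star_add, hD, hW] at h₁ h₂
  simp only [Matrix.add_mul, Matrix.mul_add, Matrix.mul_neg, Matrix.neg_mul,
    diagonal_mul_diagonal] at h₁ h₂
  constructor
  · ext i j
    have e₁ := congrFun (congrFun h₁ i) j
    have e₂ := congrFun (congrFun h₂ i) j
    simp only [add_apply, neg_apply, diagonal_mul, mul_diagonal] at e₁ e₂ ⊢
    linarith
  · ext i j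
    have e₁ := congrFun (congrFun h₁ i) j
    have e₂ := congrFun (congrFun h₂ i) j
    simp only [add_apply, neg_apply, diagonal_mul, mul_diagonal, one_apply,
      diagonal_apply] at e₁ e₂ ⊢
    split_ifs at e₁ e₂ ⊢ <;> linarith

theorem sum_sq_apply_eq_one_sub_sq (hW : star W = -W)
    (hWW : W * W = diagonal fun i => μ i ^ 2 - 1) (i : ι) :
    ∑ j, W i j ^ 2 = 1 - μ i ^ 2 := by
  have h := congrFun (congrFun hWW i) i
  rw [mul_apply, diagonal_apply_eq] at h
  rw [← neg_sub, ← h, ← Finset.sum_neg_distrib]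
  refine Finset.sum_congr rfl fun j _ => ?_
  rw [apply_eq_neg_of_star_eq_neg hW i j]
  ring

theorem sq_le_one_of_mul_self_eq_diagonal (hW : star W = -W)
    (hWW : W * W = diagonal fun i => μ i ^ 2 - 1) (i : ι) : μ i ^ 2 ≤ 1 := by
  have h := sum_sq_apply_eq_one_sub_sq hW hWW i
  have : 0 ≤ ∑ j, W i j ^ 2 := Finset.sum_nonneg fun j _ => sq_nonneg _
  linarith

theorem apply_eq_zero_of_sq_eq_one (hW : star W = -W)
    (hWW : W * W = diagonal fun i => μ i ^ 2 - 1) {i : ι} (hi : μ i ^ 2 = 1) (j : ι) :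
    W i j = 0 := by
  have h := sum_sq_apply_eq_one_sub_sq hW hWW i
  rw [hi, sub_self, Finset.sum_eq_zero_iff_of_nonneg fun j _ => sq_nonneg _] at h
  exact pow_eq_zero_iff two_ne_zero |>.mp (h j (Finset.mem_univ j))

theorem mul_self_diagonal_arccos_div_sin_mul (hW : star W = -W)
    (hcomm : Commute W (diagonal μ)) (hWW : W * W = diagonal fun i => μ i ^ 2 - 1)
    (hμ : ∀ i, μ i ≠ -1) :
    diagonal (fun i => Real.arccos (μ i) / Real.sin (Real.arccos (μ i))) * W *
        (diagonal (fun i => Real.arccos (μ i) / Real.sin (Real.arccos (μ i))) * W) =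
      diagonal fun i => -Real.arccos (μ i) ^ 2 := by
  set g : ι → ℝ := fun i => Real.arccos (μ i) / Real.sin (Real.arccos (μ i))
  have hg : Commute W (diagonal g) :=
    commute_diagonal_comp hcomm fun x => Real.arccos x / Real.sin (Real.arccos x)
  calc diagonal g * W * (diagonal g * W) = diagonal g * (W * diagonal g) * W := by
        simp only [Matrix.mul_assoc]
    _ = diagonal (fun i => g i * g i) * (W * W) := by
        rw [hg.eq, ← diagonal_mul_diagonal]; simp only [Matrix.mul_assoc]
    _ = diagonal fun i => -Real.arccos (μ i) ^ 2 := by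
        rw [hWW, diagonal_mul_diagonal]
        congr 1
        funext i
        have hsin_sq := Real.sin_arccos_sq (sq_le_one_of_mul_self_eq_diagonal hW hWW i)
        by_cases hsin : Real.sin (Real.arccos (μ i)) = 0
        · have hμi : μ i = 1 :=
            (sq_eq_one_iff.mp (by nlinarith)).resolve_right (hμ i)
          simp [g, hμi]
        · simp only [g, show μ i ^ 2 - 1 = -Real.sin (Real.arccos (μ i)) ^ 2 by linarith]
          field_simp

-- Where `μ i = 1` the coefficient is the junk value `0 / 0 = 0`; row `i` of `W` vanishes there.
theorem exp_diagonal_arccos_div_sin_mul (hW : star W = -W) (hcomm : Commute W (diagonal μ))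
    (hWW : W * W = diagonal fun i => μ i ^ 2 - 1) (hμ : ∀ i, μ i ≠ -1) :
    exp (diagonal (fun i => Real.arccos (μ i) / Real.sin (Real.arccos (μ i))) * W) =
      diagonal μ + W := by
  rw [exp_eq_of_mul_self_eq_diagonal (mul_self_diagonal_arccos_div_sin_mul hW hcomm hWW hμ),
    ← Matrix.mul_assoc, diagonal_mul_diagonal]
  have hle := sq_le_one_of_mul_self_eq_diagonal hW hWW
  congr 1
  · congr 1
    funext i
    have := abs_le.mp ((sq_le_one_iff_abs_le_one _).mp (hle i))
    exact Real.cos_arccos this.1 this.2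
  · ext i j
    rw [diagonal_mul]
    by_cases hij : W i j = 0
    · simp [hij]
    · have hsin : Real.sin (Real.arccos (μ i)) ≠ 0 := by
        intro h
        have := Real.sin_arccos_sq (hle i)
        exact hij (apply_eq_zero_of_sq_eq_one hW hWW (by nlinarith) j)
      have hθ : Real.arccos (μ i) ≠ 0 := fun h => hsin (by rw [h, Real.sin_zero])
      rw [Real.sinc_of_ne_zero hθ]
      field_simp

theorem exists_exp_eq_diagonal_add_of_det_eq_one (hW : star W = -W)
    (hS : diagonal μ + W ∈ unitaryGroup ι ℝ) (hdet : (diagonal μ + W).det = 1) :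
    ∃ A : Matrix ι ι ℝ, exp A = diagonal μ + W := by
  obtain ⟨hcomm, hWW⟩ := commute_diagonal_and_mul_self_of_diagonal_add_mem_unitaryGroup hW hS
  set s : Finset ι := {i | μ i = -1}
  set R : Matrix ι ι ℝ := diagonal fun i => if i ∈ s then -1 else 1
  -- `W` vanishes on the rows and columns in `s`, so flipping their signs by `R` removes the
  -- eigenvalue `-1` without touching `W`.
  set ν : ι → ℝ := (fun x => if x = -1 then 1 else x) ∘ μ
  have hrow (i j : ι) (hi : i ∈ s) : W i j = 0 :=
    apply_eq_zero_of_sq_eq_one hW hWW (by simp only [s, Finset.mem_filter_univ] at hi; simp [hi]) j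
  have hcol (i j : ι) (hj : j ∈ s) : W i j = 0 := by
    rw [← neg_eq_zero, ← apply_eq_neg_of_star_eq_neg hW, hrow j i hj]
  have hSR : (diagonal μ + W) * R = diagonal ν + W := by
    rw [Matrix.add_mul, diagonal_mul_diagonal]
    congr 1
    · congr 1; funext i; by_cases hi : μ i = -1 <;> simp [s, ν, hi]
    · ext i j; rw [mul_diagonal]; by_cases hj : j ∈ s <;> simp [hj, hcol]
  have hRR : R * R = 1 := by
    rw [diagonal_mul_diagonal, ← diagonal_one]; congr 1; funext i; split_ifs <;> norm_num
  set A₀ : Matrix ι ι ℝ :=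
    diagonal (fun i => Real.arccos (ν i) / Real.sin (Real.arccos (ν i))) * W
  have hA₀ : exp A₀ = diagonal ν + W := by
    refine exp_diagonal_arccos_div_sin_mul hW (commute_diagonal_comp hcomm _) ?_ ?_
    · rw [hWW]; congr 1; funext i; by_cases hi : μ i = -1 <;> simp [ν, hi]
    · intro i; by_cases hi : μ i = -1 <;> simp [ν, hi]; norm_num
  obtain ⟨J, hJs, hJ⟩ := exists_exp_eq_diagonal_sign_of_even_card s
    (even_card_of_exp_eq_mul_diagonal_sign hdet (hA₀.trans hSR.symm))
  have hWJ : W * J = 0 := mul_eq_zero_of_forall_eq_zero_or_eq_zero fun i k j =>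
    (em (J k j = 0)).elim .inr fun hk => .inl (hcol i k (hJs k j hk).1)
  have hJA₀ : J * A₀ = 0 := mul_eq_zero_of_forall_eq_zero_or_eq_zero fun i k j =>
    (em (J i k = 0)).elim .inl fun hk => .inr (by simp [A₀, diagonal_mul, hrow k j (hJs i k hk).2])
  have hcomm₀ : Commute A₀ J := by
    rw [Commute, SemiconjBy, Matrix.mul_assoc, hWJ, hJA₀, Matrix.mul_zero]
  refine ⟨A₀ + J, ?_⟩
  rw [exp_add_of_commute _ _ hcomm₀, hA₀, hJ, ← hSR, Matrix.mul_assoc, hRR, Matrix.mul_one]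

end OrthogonalNormalForm

theorem exists_unitary_conj_eq_diagonal_add_skew (Q : Matrix ι ι ℝ) :
    ∃ U ∈ unitaryGroup ι ℝ, ∃ μ : ι → ℝ, ∃ W : Matrix ι ι ℝ,
      star W = -W ∧ star U * Q * U = diagonal μ + W := by
  set C : Matrix ι ι ℝ := (2⁻¹ : ℝ) • (Q + star Q)
  set K : Matrix ι ι ℝ := (2⁻¹ : ℝ) • (Q - star Q)
  have hC : C.IsHermitian :=
    ((IsSelfAdjoint.all _).smul (IsSelfAdjoint.add_star_self Q)).isHermitian
  have hK : star K = -K := by simp only [K, star_smul, star_sub, star_star, star_trivial]; module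
  set U : Matrix ι ι ℝ := ↑hC.eigenvectorUnitary
  have hdiag : star U * C * U = diagonal hC.eigenvalues := by
    simpa using hC.conjStarAlgAut_star_eigenvectorUnitary
  refine ⟨U, hC.eigenvectorUnitary.2, hC.eigenvalues, star U * K * U, ?_, ?_⟩
  · simp only [star_mul, star_star, hK, Matrix.mul_neg, Matrix.neg_mul, Matrix.mul_assoc]
  · rw [← hdiag, ← Matrix.add_mul, ← Matrix.mul_add]
    congr 2
    module

theorem exists_exp_eq_of_mem_specialUnitaryGroup {Q : Matrix ι ι ℝ}
    (hQ : Q ∈ specialUnitaryGroup ι ℝ) : ∃ B : Matrix ι ι ℝ, exp B = Q := by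
  obtain ⟨hQu, hdet⟩ := mem_specialUnitaryGroup_iff.mp hQ
  obtain ⟨U, hU, μ, W, hW, hconj⟩ := exists_unitary_conj_eq_diagonal_add_skew Q
  have hUU : U * star U = 1 := mem_unitaryGroup_iff.mp hU
  have hUU' : star U * U = 1 := mem_unitaryGroup_iff'.mp hU
  have hS : diagonal μ + W ∈ unitaryGroup ι ℝ :=
    hconj ▸ mul_mem (mul_mem (Unitary.star_mem hU) hQu) hU
  have hdetS : (diagonal μ + W).det = 1 := by
    rw [← hconj, det_mul, det_mul, mul_right_comm, ← det_mul, hUU', det_one, one_mul, hdet]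
  obtain ⟨A, hA⟩ := exists_exp_eq_diagonal_add_of_det_eq_one hW hS hdetS
  refine ⟨U * A * star U, ?_⟩
  rw [exp_unitary_conj hU, hA, ← hconj, ← Matrix.mul_assoc, ← Matrix.mul_assoc, hUU,
    Matrix.one_mul, Matrix.mul_assoc, hUU, Matrix.mul_one]

theorem exists_exp_mul_mem_unitaryGroup {M : Matrix ι ι ℝ} (hM : M.det ≠ 0) :
    ∃ B Q : Matrix ι ι ℝ, Q ∈ unitaryGroup ι ℝ ∧ M = exp B * Q := by
  have hT : (M * Mᴴ).PosDef :=
    .mul_conjTranspose_self M (vecMul_injective_iff_isUnit.mpr ((isUnit_iff_isUnit_det M).mpr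
      (Ne.isUnit hM)))
  obtain ⟨B, hB, hexpB⟩ := hT.exists_isHermitian_exp_eq
  set B₁ : Matrix ι ι ℝ := (2⁻¹ : ℝ) • B
  have hcomm : Commute (-B₁) B := ((Commute.refl B).smul_left _).neg_left
  refine ⟨B₁, exp (-B₁) * M, ?_, ?_⟩
  · have hstar : star (exp (-B₁)) = exp (-B₁) := by
      rw [star_eq_conjTranspose, ← exp_conjTranspose, conjTranspose_neg, conjTranspose_smul,
        hB.eq, star_trivial]
    rw [mem_unitaryGroup_iff, star_mul, hstar, Matrix.mul_assoc, ← Matrix.mul_assoc M,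
      star_eq_conjTranspose M, ← hexpB, ← exp_add_of_commute _ _ hcomm.symm,
      ← exp_add_of_commute _ _ (hcomm.add_right (Commute.refl _))]
    rw [show -B₁ + (B + -B₁) = 0 by simp only [B₁]; module, exp_zero]
  · rw [← Matrix.mul_assoc, ← exp_add_of_commute _ _ (Commute.refl B₁).neg_right, add_neg_cancel,
      exp_zero, Matrix.one_mul]

theorem exists_exp_mul_exp_eq_of_det_pos {M : Matrix ι ι ℝ} (hM : 0 < M.det) :
    ∃ B₁ B₂ : Matrix ι ι ℝ, M = exp B₁ * exp B₂ := by
  obtain ⟨B₁, Q, hQ, rfl⟩ := exists_exp_mul_mem_unitaryGroup hM.ne'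
  have hdetQ : 0 < Q.det := by
    rw [det_mul] at hM
    exact pos_of_mul_pos_right hM (det_exp_pos B₁).le
  have hQ1 : Q.det = 1 := by
    have h := congrArg det (mem_unitaryGroup_iff.mp hQ)
    rw [det_mul, star_eq_conjTranspose, det_conjTranspose, star_trivial, det_one] at h
    nlinarith
  obtain ⟨B₂, rfl⟩ := exists_exp_eq_of_mem_specialUnitaryGroup
    (mem_specialUnitaryGroup_iff.mpr ⟨hQ, hQ1⟩)
  exact ⟨B₁, B₂, rfl⟩

end Matrix

/-- If `M ∈ Mₙ(ℝ)` has negative determinant, then `M = Ĩₙ · e^{B₁} e^{B₂}` for some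
`B₁, B₂ ∈ Mₙ(ℝ)`, where `Ĩₙ = diag(-1, 1, …, 1)`. -/
theorem stmt15 {n : ℕ} (M : Matrix (Fin n) (Fin n) ℝ) (hM : M.det < 0) :
    ∃ B₁ B₂ : Matrix (Fin n) (Fin n) ℝ,
      M = (Matrix.diagonal fun i : Fin n => if (i : ℕ) = 0 then (-1 : ℝ) else 1) *
          (NormedSpace.exp B₁ * NormedSpace.exp B₂) := by
  set D : Matrix (Fin n) (Fin n) ℝ := diagonal fun i : Fin n => if (i : ℕ) = 0 then -1 else 1
  have hn : n ≠ 0 := by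
    rintro rfl
    norm_num at hM
  have hD : D * D = 1 := by
    rw [diagonal_mul_diagonal, ← diagonal_one]
    congr 1; ext i; split_ifs <;> norm_num
  have hdetD : D.det = -1 := by
    obtain ⟨m, rfl⟩ := Nat.exists_eq_succ_of_ne_zero hn
    simp [D, det_diagonal]
  obtain ⟨B₁, B₂, h⟩ := exists_exp_mul_exp_eq_of_det_pos (M := D * M)
    (by rw [det_mul, hdetD]; linarith)
  exact ⟨B₁, B₂, by rw [← h, ← Matrix.mul_assoc, hD, Matrix.one_mul]⟩
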